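/- arXiv:1805.07273 — 6 statements merged into one kernel-verified Lean document; each statement's English description precedes it below -/
import Mathlib

section
/- Let n ≥ 1, let U : ℝⁿ → ℝ be continuously differentiable, let f_U : ℝⁿ → ℝⁿ be continuous with ⟨∇U(x), f_U(x)⟩ ≤ 0 for all x ∈ ℝⁿ, and set f := -∇U + f_U. Then for every σ > 0, every T > 0, and every C¹ path φ : [0,T] → ℝⁿ, the Freidlin–Wentzell action satisfies S(φ) ≥ (4/σ²)·(U(φ(T)) − U(φ(0))). -/
open MeasureTheory
open scoped RealInnerProductSpace

/-!
Along any path, `4 ⟪∇U(φ), φ'⟫ ≤ ‖φ' - f(φ)‖²`: writing `φ' - f(φ) = (φ' - f_U(φ)) + ∇U(φ)` and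
expanding the square gives `‖φ' - f_U(φ) - ∇U(φ)‖² + 4⟪φ', ∇U(φ)⟫ - 4⟪f_U(φ), ∇U(φ)⟫`, whose first
and last terms are nonnegative by sub-orthogonality. Integrating over `[0, T]`, the left side is
`4 (U(φ(T)) - U(φ(0)))` by the chain rule and the fundamental theorem of calculus.
-/

section

variable {E : Type*} [NormedAddCommGroup E] [InnerProductSpace ℝ E]

theorem four_inner_le_norm_add_sub_sq {a g h : E} (hgh : ⟪g, h⟫ ≤ 0) :
    4 * ⟪g, a⟫ ≤ ‖a + g - h‖ ^ 2 := by
  have hexpand : ‖a + g - h‖ ^ 2 = ‖a - h - g‖ ^ 2 + 4 * (⟪g, a⟫ - ⟪g, h⟫) := by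
    rw [show a + g - h = a - h + g by abel, norm_add_sq_real, norm_sub_sq_real (a - h), inner_sub_left,
      real_inner_comm a g, real_inner_comm h g]
    ring
  nlinarith [sq_nonneg ‖a - h - g‖]

variable [CompleteSpace E]

theorem ContDiff.continuous_gradient {U : E → ℝ} (hU : ContDiff ℝ 1 U) :
    Continuous (gradient U) :=
  (InnerProductSpace.toDual ℝ E).symm.continuous.comp (hU.continuous_fderiv one_ne_zero)

theorem HasGradientAt.comp_hasDerivAt {U : E → ℝ} {g x' : E} {φ : ℝ → E} {t : ℝ}
    (hU : HasGradientAt U g (φ t)) (hφ : HasDerivAt φ x' t) :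
    HasDerivAt (U ∘ φ) ⟪g, x'⟫ t := by
  simpa [InnerProductSpace.toDual] using hU.hasFDerivAt.comp_hasDerivAt t hφ

theorem integral_inner_gradient_comp_eq_sub {U : E → ℝ} (hU : ContDiff ℝ 1 U) {φ φ' : ℝ → E}
    {a b : ℝ} (hab : a ≤ b)
    (hφ : ∀ t ∈ Set.Icc a b, HasDerivWithinAt φ (φ' t) (Set.Icc a b) t)
    (hφ' : ContinuousOn φ' (Set.Icc a b)) :
    ∫ t in a..b, ⟪gradient U (φ t), φ' t⟫ = U (φ b) - U (φ a) := by
  have hφc : ContinuousOn φ (Set.Icc a b) := fun t ht => (hφ t ht).continuousWithinAt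
  refine intervalIntegral.integral_eq_sub_of_hasDerivAt_of_le hab
    (hU.continuous.comp_continuousOn hφc) (fun t ht => ?_) ?_
  · have hφt : HasDerivAt φ (φ' t) t :=
      (hφ t (Set.Ioo_subset_Icc_self ht)).hasDerivAt (Icc_mem_nhds ht.1 ht.2)
    exact ((hU.differentiable one_ne_zero) (φ t)).hasGradientAt.comp_hasDerivAt hφt
  · refine ContinuousOn.intervalIntegrable ?_
    rw [Set.uIcc_of_le hab]
    exact (hU.continuous_gradient.comp_continuousOn hφc).inner hφ'

end

theorem action_lower_bound_general (n : ℕ)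
    (U : EuclideanSpace ℝ (Fin n) → ℝ) (hU : ContDiff ℝ 1 U)
    (fU : EuclideanSpace ℝ (Fin n) → EuclideanSpace ℝ (Fin n)) (hfU : Continuous fU)
    (hsub : ∀ x, ⟪gradient U x, fU x⟫ ≤ 0)
    (f : EuclideanSpace ℝ (Fin n) → EuclideanSpace ℝ (Fin n))
    (hf : ∀ x, f x = -gradient U x + fU x)
    (σ T : ℝ) (hT : 0 < T)
    (φ φ' : ℝ → EuclideanSpace ℝ (Fin n))
    (hφ : ∀ t ∈ Set.Icc (0:ℝ) T, HasDerivWithinAt φ (φ' t) (Set.Icc (0:ℝ) T) t)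
    (hφ' : ContinuousOn φ' (Set.Icc (0:ℝ) T)) :
    (4/σ^2) * (U (φ T) - U (φ 0)) ≤
      (1/σ^2) * ∫ t in (0:ℝ)..T, ‖φ' t - f (φ t)‖^2 := by
  have hφc : ContinuousOn φ (Set.Icc 0 T) := fun t ht => (hφ t ht).continuousWithinAt
  have hgrad := hU.continuous_gradient
  have hfc : Continuous f := by
    rw [funext hf]
    exact hgrad.neg.add hfU
  have hpointwise : ∀ t, 4 * ⟪gradient U (φ t), φ' t⟫ ≤ ‖φ' t - f (φ t)‖ ^ 2 := fun t => by
    rw [hf, sub_add_eq_sub_sub, sub_neg_eq_add]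
    exact four_inner_le_norm_add_sub_sq (hsub (φ t))
  have hmono : ∫ t in (0:ℝ)..T, 4 * ⟪gradient U (φ t), φ' t⟫ ≤
      ∫ t in (0:ℝ)..T, ‖φ' t - f (φ t)‖ ^ 2 := by
    refine intervalIntegral.integral_mono_on hT.le ?_ ?_ (fun t _ => hpointwise t) <;>
      refine ContinuousOn.intervalIntegrable ?_ <;> rw [Set.uIcc_of_le hT.le]
    · exact continuousOn_const.mul ((hgrad.comp_continuousOn hφc).inner hφ')
    · exact (hφ'.sub (hfc.comp_continuousOn hφc)).norm.pow 2
  rw [intervalIntegral.integral_const_mul, integral_inner_gradient_comp_eq_sub hU hT.le hφ hφ']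
    at hmono
  calc (4/σ^2) * (U (φ T) - U (φ 0)) = (1/σ^2) * (4 * (U (φ T) - U (φ 0))) := by ring
    _ ≤ _ := by gcongr

/-- under a sub-orthogonal decomposition `f = -∇U + f_U`,
the Freidlin–Wentzell action of any C¹ path is bounded below by
`(4/σ²)·(U(φ(T)) − U(φ(0)))`. -/
theorem action_lower_bound (n : ℕ) (hn : 1 ≤ n)
    (U : EuclideanSpace ℝ (Fin n) → ℝ) (hU : ContDiff ℝ 1 U)
    (fU : EuclideanSpace ℝ (Fin n) → EuclideanSpace ℝ (Fin n)) (hfU : Continuous fU)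
    (hsub : ∀ x, ⟪gradient U x, fU x⟫ ≤ 0)
    (f : EuclideanSpace ℝ (Fin n) → EuclideanSpace ℝ (Fin n))
    (hf : ∀ x, f x = -gradient U x + fU x)
    (σ T : ℝ) (hσ : 0 < σ) (hT : 0 < T)
    (φ φ' : ℝ → EuclideanSpace ℝ (Fin n))
    (hφ : ∀ t ∈ Set.Icc (0:ℝ) T, HasDerivWithinAt φ (φ' t) (Set.Icc (0:ℝ) T) t)
    (hφ' : ContinuousOn φ' (Set.Icc (0:ℝ) T)) :
    (4/σ^2) * (U (φ T) - U (φ 0)) ≤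
      (1/σ^2) * ∫ t in (0:ℝ)..T, ‖φ' t - f (φ t)‖^2 :=
  action_lower_bound_general n U hU fU hfU hsub f hf σ T hT φ φ' hφ hφ'
end

section
/- Let n ≥ 1, let U be a real polynomial in n variables, and let f₁, …, fₙ be real polynomials in n variables with e := maxᵢ totalDegree(fᵢ). Suppose that for all x ∈ ℝⁿ, Σᵢ (∂U/∂xᵢ)(x)·fᵢ(x) + Σᵢ ((∂U/∂xᵢ)(x))² ≤ 0. Then the total degree d of U satisfies d ≤ e + 1. -/
/-!
Suppose `deg U = d + 1` with `d > e`. Choose `v` where the top homogeneous component of `U` does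
not vanish and restrict everything to the line `t ↦ t • v`. By the chain rule the derivative of
`t ↦ U (t • v)` has degree exactly `d`, so some `∂ᵢU (t • v)` has degree exactly `d`. The left-hand
side of the hypothesis along the line is then a polynomial in `t` whose `t ^ (2 * d)` coefficient
is a nonzero sum of squares, while `⟨∇U, f⟩` only reaches degree `d + e < 2 * d`; so it tends to
`+∞` and cannot stay `≤ 0`.
-/

open scoped Polynomial

namespace MvPolynomial

section CommSemiring

variable {σ R : Type*} [CommSemiring R]

theorem totalDegree_pderiv_le (i : σ) (p : MvPolynomial σ R) :
    (pderiv i p).totalDegree ≤ p.totalDegree - 1 := by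
  classical
  refine Finset.sup_le fun m hm => ?_
  have hm' : m + Finsupp.single i 1 ∈ p.support := by
    rw [mem_support_iff, coeff_pderiv] at hm
    exact mem_support_iff.mpr (left_ne_zero_of_mul hm)
  have hdeg : (m + Finsupp.single i 1).degree ≤ p.totalDegree := le_totalDegree hm'
  rw [map_add, Finsupp.degree_single] at hdeg
  change m.degree ≤ _
  omega

theorem homogeneousComponent_totalDegree_ne_zero {p : MvPolynomial σ R} (hp : p ≠ 0) :
    homogeneousComponent p.totalDegree p ≠ 0 := by
  obtain ⟨m, hm, hdeg⟩ :=
    Finset.exists_mem_eq_sup p.support (support_nonempty.mpr hp) fun m => m.degree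
  rw [← support_nonempty, support_homogeneousComponent]
  exact ⟨m, Finset.mem_filter.mpr ⟨hm, hdeg.symm⟩⟩

noncomputable def lineRestrict (v : σ → R) : MvPolynomial σ R →ₐ[R] R[X] :=
  aeval fun i => Polynomial.C (v i) * Polynomial.X

theorem lineRestrict_X (v : σ → R) (i : σ) :
    lineRestrict v (X i) = Polynomial.C (v i) * Polynomial.X :=
  aeval_X _ _

theorem lineRestrict_monomial (v : σ → R) (m : σ →₀ ℕ) (a : R) :
    lineRestrict v (monomial m a) =
      Polynomial.C (eval v (monomial m a)) * Polynomial.X ^ m.degree := by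
  simp only [lineRestrict, aeval_monomial, eval_monomial, mul_pow, Finsupp.degree_apply,
    Finsupp.prod, Finset.prod_mul_distrib, Finset.prod_pow_eq_pow_sum, map_mul, map_prod, map_pow,
    Polynomial.algebraMap_eq]
  ring

theorem eval_lineRestrict (v : σ → R) (p : MvPolynomial σ R) (t : R) :
    (lineRestrict v p).eval t = eval (t • v) p := by
  suffices (Polynomial.evalRingHom t).comp (lineRestrict v : MvPolynomial σ R →+* R[X]) =
      eval (t • v) from RingHom.congr_fun this p
  ext <;> simp [lineRestrict, mul_comm (v _)]

theorem coeff_lineRestrict (v : σ → R) (p : MvPolynomial σ R) (k : ℕ) :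
    (lineRestrict v p).coeff k = eval v (homogeneousComponent k p) := by
  conv_lhs => rw [← p.support_sum_monomial_coeff]
  rw [homogeneousComponent_apply, map_sum, map_sum, Polynomial.finsetSum_coeff, Finset.sum_filter]
  refine Finset.sum_congr rfl fun m _ => ?_
  rw [lineRestrict_monomial, Polynomial.coeff_C_mul_X_pow]
  simp only [eq_comm]

theorem natDegree_lineRestrict_le (v : σ → R) (p : MvPolynomial σ R) :
    (lineRestrict v p).natDegree ≤ p.totalDegree :=
  Polynomial.natDegree_le_iff_coeff_eq_zero.mpr fun _ hk => by
    rw [coeff_lineRestrict, homogeneousComponent_eq_zero _ _ hk, map_zero]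

theorem derivative_lineRestrict [Fintype σ] (v : σ → R) (p : MvPolynomial σ R) :
    Polynomial.derivative (lineRestrict v p) =
      ∑ i, Polynomial.C (v i) * lineRestrict v (pderiv i p) := by
  induction p using MvPolynomial.induction_on with
  | C a => simp [lineRestrict]
  | add p q hp hq => simp [hp, hq, mul_add, Finset.sum_add_distrib]
  | mul_X p j hp =>
    classical
    simp only [map_mul, lineRestrict_X, Polynomial.derivative_mul, hp, Derivation.leibniz,
      pderiv_X, smul_eq_mul, map_add, Pi.single_apply, apply_ite (lineRestrict v), map_zero,
      mul_add, mul_ite, mul_zero, mul_one, Finset.sum_add_distrib, Finset.sum_ite_eq,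
      Finset.mem_univ, if_true, Polynomial.derivative_C, Polynomial.derivative_X, zero_mul,
      zero_add, Finset.sum_mul]
    rw [add_comm]
    congr 1
    · ring
    · exact Finset.sum_congr rfl fun _ _ => by ring

end CommSemiring

theorem exists_coeff_lineRestrict_pderiv_ne_zero {σ R : Type*} [Fintype σ] [CommRing R]
    [IsDomain R] [CharZero R] {p : MvPolynomial σ R} {D : ℕ} (hp : p.totalDegree = D + 1) :
    ∃ v i, (lineRestrict v (pderiv i p)).coeff D ≠ 0 := by
  have hp0 : p ≠ 0 := by rintro rfl; simp at hp
  obtain ⟨v, hv⟩ : ∃ v, eval v (homogeneousComponent (D + 1) p) ≠ 0 := by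
    by_contra! h
    exact hp ▸ homogeneousComponent_totalDegree_ne_zero hp0 <| funext fun v => by simpa using h v
  have htop : (lineRestrict v p).coeff (D + 1) ≠ 0 := by rwa [coeff_lineRestrict]
  have hderiv : (Polynomial.derivative (lineRestrict v p)).coeff D ≠ 0 := by
    rw [Polynomial.coeff_derivative]
    exact mul_ne_zero htop (Nat.cast_add_one_ne_zero D)
  rw [derivative_lineRestrict, Polynomial.finsetSum_coeff] at hderiv
  obtain ⟨i, -, hi⟩ := Finset.exists_ne_zero_of_sum_ne_zero hderiv
  exact ⟨v, i, right_ne_zero_of_mul (by rwa [Polynomial.coeff_C_mul] at hi)⟩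

end MvPolynomial

namespace Polynomial

section SumMulAddSumSq

variable {ι R : Type*} [Fintype ι] [CommSemiring R] {A B : ι → R[X]} {D : ℕ}

theorem natDegree_sum_mul_add_sum_sq_le (hA : ∀ i, (A i).natDegree ≤ D)
    (hB : ∀ i, (B i).natDegree ≤ D) :
    (∑ i, A i * B i + ∑ i, A i ^ 2).natDegree ≤ D + D := by
  refine (natDegree_add_le _ _).trans (max_le ?_ ?_) <;>
    refine natDegree_sum_le_of_forall_le _ _ fun i _ => ?_
  · exact natDegree_mul_le.trans (add_le_add (hA i) (hB i))
  · exact (natDegree_pow_le_of_le 2 (hA i)).trans (by omega)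

theorem coeff_sum_mul_add_sum_sq (hA : ∀ i, (A i).natDegree ≤ D)
    (hB : ∀ i, (B i).natDegree < D) :
    (∑ i, A i * B i + ∑ i, A i ^ 2).coeff (D + D) = ∑ i, (A i).coeff D ^ 2 := by
  have hAB (i : ι) : (A i * B i).coeff (D + D) = 0 :=
    coeff_eq_zero_of_natDegree_lt <|
      natDegree_mul_le.trans_lt (by have := hA i; have := hB i; omega)
  simp only [coeff_add, finsetSum_coeff, hAB, Finset.sum_const_zero, zero_add, sq,
    coeff_mul_add_eq_of_natDegree_le (hA _) (hA _)]

end SumMulAddSumSq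

variable {𝕜 : Type*} [NormedField 𝕜] [LinearOrder 𝕜] [IsStrictOrderedRing 𝕜] [OrderTopology 𝕜]

theorem exists_eval_pos_of_coeff_pos {P : 𝕜[X]} {N : ℕ} (hN : 0 < N) (hdeg : P.natDegree ≤ N)
    (hc : 0 < P.coeff N) : ∃ t, 0 < P.eval t := by
  have hnat : P.natDegree = N := le_antisymm hdeg (le_natDegree_of_ne_zero hc.ne')
  have hlc : 0 < P.leadingCoeff := by rwa [leadingCoeff, hnat]
  have hpos : 0 < P.degree := natDegree_pos_iff_degree_pos.mp (hnat ▸ hN)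
  exact ((P.tendsto_atTop_of_leadingCoeff_nonneg hpos hlc.le).eventually_gt_atTop 0).exists

theorem exists_eval_sum_mul_add_sum_sq_pos {ι : Type*} [Fintype ι] {A B : ι → 𝕜[X]} {D : ℕ}
    (hA : ∀ i, (A i).natDegree ≤ D) (hB : ∀ i, (B i).natDegree < D)
    (hA0 : ∃ i, (A i).coeff D ≠ 0) :
    ∃ t, 0 < (∑ i, A i * B i + ∑ i, A i ^ 2).eval t := by
  obtain ⟨i, hi⟩ := hA0
  refine exists_eval_pos_of_coeff_pos (N := D + D) (by have := hB i; omega)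
    (natDegree_sum_mul_add_sum_sq_le hA fun i => (hB i).le) ?_
  rw [coeff_sum_mul_add_sum_sq hA hB]
  exact Finset.sum_pos' (fun j _ => sq_nonneg _) ⟨i, Finset.mem_univ i, by positivity⟩

end Polynomial

open MvPolynomial

theorem degree_bound_of_suborthogonality_general (n : ℕ)
    (U : MvPolynomial (Fin n) ℝ) (f : Fin n → MvPolynomial (Fin n) ℝ)
    (hsub : ∀ x : Fin n → ℝ,
      (∑ i : Fin n, (eval x) (pderiv i U) * (eval x) (f i)) +
      (∑ i : Fin n, ((eval x) (pderiv i U))^2) ≤ 0) :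
    U.totalDegree ≤ (Finset.univ.sup fun i : Fin n => (f i).totalDegree) + 1 := by
  by_contra! hlt
  obtain ⟨D, hD⟩ : ∃ D, U.totalDegree = D + 1 := ⟨U.totalDegree - 1, by omega⟩
  obtain ⟨v, i, hi⟩ := exists_coeff_lineRestrict_pderiv_ne_zero hD
  have hA (j : Fin n) : (lineRestrict v (pderiv j U)).natDegree ≤ D :=
    (natDegree_lineRestrict_le v _).trans <| by simpa [hD] using totalDegree_pderiv_le j U
  have hB (j : Fin n) : (lineRestrict v (f j)).natDegree < D :=
    (natDegree_lineRestrict_le v _).trans_lt <|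
      (Finset.le_sup (f := fun j => (f j).totalDegree) (Finset.mem_univ j)).trans_lt (by omega)
  obtain ⟨t, ht⟩ := Polynomial.exists_eval_sum_mul_add_sum_sq_pos hA hB ⟨i, hi⟩
  simp only [Polynomial.eval_add, Polynomial.eval_finsetSum, Polynomial.eval_mul,
    Polynomial.eval_pow, eval_lineRestrict] at ht
  exact (hsub (t • v)).not_gt ht

/-- if the polynomial sub-orthogonality condition
`⟨∇U(x), f(x)⟩ + ‖∇U(x)‖² ≤ 0` holds for all `x ∈ ℝⁿ`, then the total degree
`d` of `U` satisfies `d ≤ e + 1` where `e = maxᵢ totalDegree(fᵢ)`. -/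
theorem degree_bound_of_suborthogonality (n : ℕ) (hn : 1 ≤ n)
    (U : MvPolynomial (Fin n) ℝ) (f : Fin n → MvPolynomial (Fin n) ℝ)
    (hsub : ∀ x : Fin n → ℝ,
      (∑ i : Fin n, (eval x) (pderiv i U) * (eval x) (f i)) +
      (∑ i : Fin n, ((eval x) (pderiv i U))^2) ≤ 0) :
    U.totalDegree ≤ (Finset.univ.sup fun i : Fin n => (f i).totalDegree) + 1 :=
  degree_bound_of_suborthogonality_general n U f hsub
end

section
/- Let n ≥ 1 and let A be a real n×n matrix. Write S := (1/2)(A + Aᵀ) for its symmetric part and K := (1/2)(A − Aᵀ) for its antisymmetric part, so that A = S + K. Then ⟨S x, K x⟩ = 0 for all x ∈ ℝⁿ (i.e. the symmetric/antisymmetric split is an orthogonal decomposition of the linear field Ax) if and only if A is normal, i.e. AᵀA = AAᵀ. -/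
/-!
Since `S` is symmetric, `⟨S x, K x⟩ = xᵀ (S K) x`, and a quadratic form vanishes identically
exactly when its matrix is skew, i.e. when `S K + (S K)ᵀ = S K - K S = 0`. Writing `A = S + K`
with `Sᵀ = S` and `Kᵀ = -K` gives `Aᵀ A - A Aᵀ = 2 (S K - K S)`, so this happens exactly when
`A` is normal.
-/

open Matrix

namespace Matrix

variable {l m n R : Type*} [Fintype l] [Fintype m] [Fintype n]

theorem mulVec_dotProduct_mulVec [CommSemiring R] (A : Matrix m n R) (B : Matrix m l R)
    (x : n → R) (y : l → R) : A *ᵥ x ⬝ᵥ B *ᵥ y = x ⬝ᵥ (Aᵀ * B) *ᵥ y := by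
  rw [dotProduct_mulVec, vecMul_mulVec, ← dotProduct_mulVec]

theorem forall_dotProduct_mulVec_self_eq_zero_iff [CommRing R] [NoZeroDivisors R] [CharZero R]
    [DecidableEq n] (M : Matrix n n R) : (∀ x : n → R, x ⬝ᵥ M *ᵥ x = 0) ↔ M + Mᵀ = 0 := by
  let B : Matrix n n R ≃ₗ[R] (n → R) →ₗ[R] (n → R) →ₗ[R] R := toLinearMap₂' R
  have hB : B (M + Mᵀ) = B M + (B M).flip :=
    LinearMap.ext₂ fun x y => by
      simp only [B, map_add, LinearMap.add_apply, LinearMap.flip_apply, toLinearMap₂'_apply',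
        dotProduct_transpose_mulVec]
  rw [← B.map_eq_zero_iff, hB, add_eq_zero_iff_eq_neg (a := B M),
    ← LinearMap.isAlt_iff_eq_neg_flip]
  simp only [LinearMap.IsAlt, B, toLinearMap₂'_apply']

theorem IsSymm.transpose_mul_sub_mul_transpose_add [CommRing R] {S K : Matrix n n R}
    (hS : S.IsSymm) (hK : Kᵀ = -K) :
    (S + K)ᵀ * (S + K) - (S + K) * (S + K)ᵀ = (2 : R) • (Sᵀ * K + (Sᵀ * K)ᵀ) := by
  simp only [transpose_add, transpose_mul, hS.eq, hK, add_mul, mul_add, neg_mul, mul_neg,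
    two_smul]
  abel

end Matrix

theorem symm_antisymm_orthogonal_iff_normal_general (n : ℕ)
    (A S K : Matrix (Fin n) (Fin n) ℝ)
    (hS : S = (1/2 : ℝ) • (A + Aᵀ)) (hK : K = (1/2 : ℝ) • (A - Aᵀ)) :
    (∀ x : Fin n → ℝ, (S.mulVec x) ⬝ᵥ (K.mulVec x) = 0) ↔ Aᵀ * A = A * Aᵀ := by
  have hS_symm : S.IsSymm := by
    rw [hS, IsSymm, transpose_smul, transpose_add, transpose_transpose, add_comm]
  have hK_skew : Kᵀ = -K := by
    rw [hK, transpose_smul, transpose_sub, transpose_transpose, ← smul_neg, neg_sub]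
  have hA : S + K = A := by
    rw [hS, hK]
    module
  simp only [mulVec_dotProduct_mulVec, forall_dotProduct_mulVec_self_eq_zero_iff]
  rw [← sub_eq_zero (a := Aᵀ * A), ← hA, hS_symm.transpose_mul_sub_mul_transpose_add hK_skew,
    smul_eq_zero, or_iff_right two_ne_zero]

/-- with `S = (1/2)(A + Aᵀ)` the symmetric part and
`K = (1/2)(A − Aᵀ)` the antisymmetric part of `A`, the splitting `A = S + K`
is an orthogonal decomposition of the linear field `Ax`
(`⟨Sx, Kx⟩ = 0` for all `x`) if and only if `A` is normal (`AᵀA = AAᵀ`). -/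
theorem symm_antisymm_orthogonal_iff_normal (n : ℕ) (hn : 1 ≤ n)
    (A S K : Matrix (Fin n) (Fin n) ℝ)
    (hS : S = (1/2 : ℝ) • (A + Aᵀ)) (hK : K = (1/2 : ℝ) • (A - Aᵀ)) :
    (∀ x : Fin n → ℝ, (S.mulVec x) ⬝ᵥ (K.mulVec x) = 0) ↔ Aᵀ * A = A * Aᵀ :=
  symm_antisymm_orthogonal_iff_normal_general n A S K hS hK
end

section
/- Let n ≥ 1 and let A be a real n×n matrix all of whose complex eigenvalues have strictly negative real part. Call a real symmetric n×n matrix P feasible if xᵀP(A+P)x ≤ 0 for all x ∈ ℝⁿ. Suppose P̂ is feasible and trace-maximal, i.e. tr(P) ≤ tr(P̂) for every feasible P. Then P̂ satisfies the algebraic Riccati equation P̂·A + Aᵀ·P̂ + 2P̂² = 0; consequently ⟨P̂x, (A+P̂)x⟩ = 0 for all x, so U(x) = (1/2)·xᵀP̂x yields an orthogonal decomposition Ax = −∇U(x) + (A+P̂)x. -/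
/-!
Let `X` solve the Lyapunov equation `A X + X Aᵀ = -2`. By Lyapunov's theorem `X` is positive
definite, and `Y = X⁻¹` solves the Riccati equation `Y A + Aᵀ Y + 2 Y² = 0`, so `Y` is feasible.
If `P` is feasible, then `F = X (Y - P) X` satisfies `A F + F Aᵀ ≤ 0`, hence `F ≥ 0` by Lyapunov's
theorem again: `Y` dominates every feasible matrix. Thus `Y - P̂ ≥ 0` while `tr Y ≤ tr P̂` by
maximality, which forces `P̂ = Y`.

Lyapunov's theorem is proved by deforming `A` to `-1` through the stable matrices
`u A - (1 - u)`: the solutions depend continuously on `u`, and they cannot leave the positive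
definite cone, because a semidefinite solution `X` with `X w = 0` would give `wᵀ Q w = 0`.
-/

open Matrix Set Filter Topology Kronecker

open Polynomial in
theorem Matrix.eq_zero_of_mul_eq_mul_of_disjoint_spectrum {K m n : Type*} [Field K]
    [IsAlgClosed K] [Fintype m] [DecidableEq m] [Fintype n] [DecidableEq n]
    {C : Matrix m m K} {D : Matrix n n K} {G : Matrix m n K}
    (hCD : Disjoint (spectrum K C) (spectrum K D)) (h : C * G = G * D) : G = 0 := by
  have hpow (k : ℕ) : C ^ k * G = G * D ^ k := by
    induction k with
    | zero => simp
    | succ k ih =>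
      rw [pow_succ', Matrix.mul_assoc, ih, ← Matrix.mul_assoc, h, Matrix.mul_assoc, ← pow_succ']
  have haeval (p : K[X]) : aeval C p * G = G * aeval D p := by
    induction p using Polynomial.induction_on' with
    | add p q hp hq => rw [map_add, map_add, Matrix.add_mul, Matrix.mul_add, hp, hq]
    | monomial k a =>
      simp only [aeval_monomial, Algebra.algebraMap_eq_smul_one, Matrix.smul_mul,
        Matrix.one_mul, Matrix.mul_smul, hpow]
  -- no eigenvalue of `C` is a root of `D.charpoly`
  have hunit : IsUnit (aeval C D.charpoly).det := by
    rw [← isUnit_iff_isUnit_det]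
    by_contra hC
    rw [(IsAlgClosed.splits D.charpoly).eq_prod_roots_of_monic D.charpoly_monic] at hC
    obtain ⟨k, hkC, hkD⟩ := spectrum.exists_mem_of_not_isUnit_aeval_prod hC
    exact hCD.notMem_of_mem_left hkC (mem_spectrum_iff_isRoot_charpoly.mpr hkD)
  rw [← nonsing_inv_mul_cancel_left (A := aeval C D.charpoly) G hunit, haeval,
    aeval_self_charpoly, Matrix.mul_zero, Matrix.mul_zero]

namespace Matrix

section PosDef

variable {n : Type*} [Fintype n]

theorem IsHermitian.posDef_iff_forall_mem_sphere {M : Matrix n n ℝ} (hM : M.IsHermitian) :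
    M.PosDef ↔ ∀ w ∈ Metric.sphere (0 : n → ℝ) 1, 0 < w ⬝ᵥ M *ᵥ w := by
  refine ⟨fun h w hw => ?_, fun h => PosDef.of_dotProduct_mulVec_pos hM fun x hx => ?_⟩
  · simpa using h.dotProduct_mulVec_pos (ne_zero_of_mem_unit_sphere ⟨w, hw⟩)
  · have hx' : 0 < ‖x‖ := norm_pos_iff.mpr hx
    have := h (‖x‖⁻¹ • x) (by simp [norm_smul, hx'.ne'])
    rw [mulVec_smul, dotProduct_smul, smul_dotProduct, smul_smul] at this
    simpa using (smul_pos_iff_of_pos_left (by positivity)).mp this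

theorem isCompact_setOf_not_posDef {X : ℝ → Matrix n n ℝ} (hX : ContinuousOn X (Icc 0 1))
    (hherm : ∀ u ∈ Icc (0 : ℝ) 1, (X u).IsHermitian) :
    IsCompact {u ∈ Icc (0 : ℝ) 1 | ¬(X u).PosDef} := by
  let K := Icc (0 : ℝ) 1 ×ˢ Metric.sphere (0 : n → ℝ) 1
  have hK : IsCompact K := isCompact_Icc.prod (isCompact_sphere 0 1)
  have hform : ContinuousOn (fun p : ℝ × (n → ℝ) => p.2 ⬝ᵥ X p.1 *ᵥ p.2) K :=
    (continuous_snd.dotProduct (continuous_fst.matrix_mulVec continuous_snd)).comp_continuousOn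
      ((hX.comp continuousOn_fst fun _ hp => hp.1).prodMk continuousOn_snd)
  convert (hK.of_isClosed_subset (hform.preimage_isClosed_of_isClosed hK.isClosed isClosed_Iic)
    inter_subset_left).image continuous_fst using 1
  ext u
  constructor
  · rintro ⟨hu, hnot⟩
    rw [(hherm u hu).posDef_iff_forall_mem_sphere] at hnot
    push Not at hnot
    obtain ⟨w, hw, hle⟩ := hnot
    exact ⟨(u, w), ⟨⟨hu, hw⟩, hle⟩, rfl⟩
  · rintro ⟨⟨u, w⟩, ⟨⟨hu, hw⟩, hle⟩, rfl⟩
    exact ⟨hu, fun hpd => not_lt.mpr hle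
      ((hherm u hu).posDef_iff_forall_mem_sphere.mp hpd w hw)⟩

theorem PosDef.of_continuousOn_Icc {X : ℝ → Matrix n n ℝ}
    (hX : ContinuousOn X (Icc 0 1)) (hherm : ∀ u ∈ Icc (0 : ℝ) 1, (X u).IsHermitian)
    (h0 : (X 0).PosDef) (h : ∀ u ∈ Icc (0 : ℝ) 1, (X u).PosSemidef → (X u).PosDef) :
    (X 1).PosDef := by
  by_contra h1
  set bad := {u ∈ Icc (0 : ℝ) 1 | ¬(X u).PosDef}
  have hbad : IsCompact bad := isCompact_setOf_not_posDef hX hherm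
  obtain ⟨hu₁, hnot⟩ : sInf bad ∈ bad :=
    hbad.sInf_mem ⟨1, right_mem_Icc.mpr zero_le_one, h1⟩
  set u₁ := sInf bad
  have hu₁0 : u₁ ≠ 0 := fun h => hnot (h ▸ h0)
  have hbefore : ∀ u ∈ Ico 0 u₁, (X u).PosDef := fun u hu => by
    by_contra hu'
    exact (csInf_le hbad.bddBelow ⟨⟨hu.1, hu.2.le.trans hu₁.2⟩, hu'⟩).not_gt hu.2
  refine hnot (h u₁ hu₁ (PosSemidef.of_dotProduct_mulVec_nonneg (hherm u₁ hu₁) fun w => ?_))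
  have hg : ContinuousWithinAt (fun u => star w ⬝ᵥ X u *ᵥ w) (Ico 0 u₁) u₁ :=
    ((continuous_const.dotProduct (continuous_id.matrix_mulVec continuous_const)).comp_continuousOn
      hX u₁ hu₁).mono (Ico_subset_Icc_self.trans (Icc_subset_Icc_right hu₁.2))
  have hu₁mem : u₁ ∈ closure (Ico 0 u₁) := by
    rw [closure_Ico hu₁0.symm]
    exact right_mem_Icc.mpr hu₁.1
  exact ContinuousWithinAt.closure_le (f := fun _ => (0 : ℝ))
    (g := fun u => star w ⬝ᵥ X u *ᵥ w) hu₁mem continuousWithinAt_const hg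
    fun u hu => (hbefore u hu).posSemidef.dotProduct_mulVec_nonneg w

theorem PosSemidef.posDef_of_mul_add_mul_transpose_eq_neg {B X Q : Matrix n n ℝ}
    (hX : X.PosSemidef) (hQ : Q.PosDef) (h : B * X + X * Bᵀ = -Q) : X.PosDef := by
  refine PosDef.of_dotProduct_mulVec_pos hX.1 fun w hw => ?_
  refine (hX.dotProduct_mulVec_nonneg w).lt_of_ne fun hw0 => ?_
  have hXw : X *ᵥ w = 0 := (hX.dotProduct_mulVec_zero_iff w).mp hw0.symm
  have hwX : w ᵥ* X = 0 := by
    rw [← mulVec_transpose, ← conjTranspose_eq_transpose_of_trivial, hX.1.eq, hXw]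
  have := hQ.dotProduct_mulVec_pos hw
  rw [← neg_neg Q, ← h, neg_mulVec, dotProduct_neg, add_mulVec, ← mulVec_mulVec,
    ← mulVec_mulVec, hXw, mulVec_zero, zero_add, dotProduct_mulVec, star_trivial, hwX,
    zero_dotProduct, neg_zero] at this
  exact this.false

end PosDef

variable {n : Type*} [Fintype n] [DecidableEq n]

def IsHurwitz (A : Matrix n n ℝ) : Prop :=
  ∀ μ ∈ spectrum ℂ (A.map (Complex.ofReal : ℝ → ℂ)), μ.re < 0

theorem IsHurwitz.eq_zero_of_mul_add_mul_transpose_eq_zero {B F : Matrix n n ℝ}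
    (hB : B.IsHurwitz) (h : B * F + F * Bᵀ = 0) : F = 0 := by
  set C := B.map Complex.ofRealHom
  have hCF : C * F.map Complex.ofRealHom = F.map Complex.ofRealHom * -Cᵀ := by
    have := congrArg Complex.ofRealHom.mapMatrix h
    simp only [map_add, map_mul, map_zero, RingHom.mapMatrix_apply] at this
    rwa [Matrix.mul_neg, eq_neg_iff_add_eq_zero]
  have hdisj : Disjoint (spectrum ℂ C) (spectrum ℂ (-Cᵀ)) := by
    refine Set.disjoint_left.mpr fun μ hμ hμ' => ?_
    rw [← spectrum.neg_eq, Set.mem_neg, mem_spectrum_iff_isRoot_charpoly, charpoly_transpose,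
      ← mem_spectrum_iff_isRoot_charpoly] at hμ'
    have h1 := hB _ hμ
    have h2 := hB _ hμ'
    rw [Complex.neg_re] at h2
    linarith
  exact map_injective Complex.ofReal_injective
    ((eq_zero_of_mul_eq_mul_of_disjoint_spectrum hdisj hCF).trans
      (Matrix.map_zero _ Complex.ofReal_zero).symm)

theorem IsHurwitz.smul_sub_smul_one {B : Matrix n n ℝ} (hB : B.IsHurwitz) {u : ℝ}
    (hu : u ∈ Icc (0 : ℝ) 1) : (u • B - (1 - u) • 1).IsHurwitz := by
  intro μ hμ
  have hmap : (u • B - (1 - u) • 1).map Complex.ofReal =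
      (u : ℂ) • B.map Complex.ofReal - algebraMap ℂ (Matrix n n ℂ) (1 - u : ℝ) := by
    ext i j
    by_cases hij : i = j <;> simp [hij, algebraMap_eq_diagonal]
  rw [hmap, ← spectrum.sub_singleton_eq, Set.mem_sub] at hμ
  obtain ⟨ν, hν, c, rfl, rfl⟩ := hμ
  rcases hu.1.eq_or_lt with rfl | hu0
  · have hν0 : ν = 0 := by
      by_contra hν0
      rw [Complex.ofReal_zero, zero_smul, spectrum.mem_iff, sub_zero] at hν
      exact hν ((isUnit_iff_ne_zero.mpr hν0).map _)
    simp [hν0]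
  · let v : ℂˣ := Units.mk0 u (by exact_mod_cast hu0.ne')
    change ν ∈ spectrum ℂ (v • B.map Complex.ofReal) at hν
    rw [spectrum.unit_smul_eq_smul] at hν
    obtain ⟨κ, hκ, rfl⟩ := hν
    have := hB κ hκ
    simp only [v, Units.val_mk0, smul_eq_mul, Complex.sub_re, Complex.re_ofReal_mul,
      Complex.ofReal_re]
    nlinarith [hu.2]

def lyapunovMatrix {R : Type*} [CommRing R] (B : Matrix n n R) : Matrix (n × n) (n × n) R :=
  1 ⊗ₖ B + B ⊗ₖ 1

theorem lyapunovMatrix_mulVec_vec {R : Type*} [CommRing R] (B X : Matrix n n R) :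
    lyapunovMatrix B *ᵥ vec X = vec (B * X + X * Bᵀ) := by
  rw [lyapunovMatrix, add_mulVec, kronecker_mulVec_vec, kronecker_mulVec_vec, vec_add,
    transpose_one, Matrix.mul_one, Matrix.one_mul]

theorem IsHurwitz.isUnit_det_lyapunovMatrix {B : Matrix n n ℝ} (hB : B.IsHurwitz) :
    IsUnit (lyapunovMatrix B).det := by
  rw [isUnit_iff_ne_zero, Ne, ← exists_mulVec_eq_zero_iff]
  rintro ⟨v, hv, hBv⟩
  obtain ⟨F, rfl⟩ := vec_bijective.surjective v
  rw [lyapunovMatrix_mulVec_vec, ← vec_zero, vec_inj] at hBv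
  exact hv (by rw [hB.eq_zero_of_mul_add_mul_transpose_eq_zero hBv, vec_zero])

noncomputable def lyapunovSolution (B Q : Matrix n n ℝ) : Matrix n n ℝ :=
  of fun i j => ((lyapunovMatrix B)⁻¹ *ᵥ vec Q) (j, i)

theorem vec_lyapunovSolution (B Q : Matrix n n ℝ) :
    vec (lyapunovSolution B Q) = (lyapunovMatrix B)⁻¹ *ᵥ vec Q := rfl

namespace IsHurwitz

theorem lyapunovSolution_spec {B : Matrix n n ℝ} (hB : B.IsHurwitz) (Q : Matrix n n ℝ) :
    B * lyapunovSolution B Q + lyapunovSolution B Q * Bᵀ = Q := by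
  rw [← vec_inj, ← lyapunovMatrix_mulVec_vec, vec_lyapunovSolution, mulVec_mulVec,
    mul_nonsing_inv _ hB.isUnit_det_lyapunovMatrix, one_mulVec]

theorem eq_lyapunovSolution {B X Q : Matrix n n ℝ} (hB : B.IsHurwitz)
    (h : B * X + X * Bᵀ = Q) : X = lyapunovSolution B Q := by
  rw [← sub_eq_zero]
  apply hB.eq_zero_of_mul_add_mul_transpose_eq_zero
  rw [Matrix.mul_sub, Matrix.sub_mul, sub_add_sub_comm, h, hB.lyapunovSolution_spec, sub_self]

theorem isSymm_lyapunovSolution {B Q : Matrix n n ℝ} (hB : B.IsHurwitz) (hQ : Q.IsSymm) :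
    (lyapunovSolution B Q).IsSymm := by
  refine hB.eq_lyapunovSolution ?_
  have := congrArg transpose (hB.lyapunovSolution_spec Q)
  rwa [transpose_add, transpose_mul, transpose_mul, transpose_transpose, hQ.eq, add_comm] at this

theorem continuousAt_lyapunovSolution {B : Matrix n n ℝ} (hB : B.IsHurwitz) (Q : Matrix n n ℝ) :
    ContinuousAt (fun B => lyapunovSolution B Q) B := by
  have hL : Continuous (lyapunovMatrix : Matrix n n ℝ → _) := by
    refine continuous_matrix fun i j => ?_
    simp only [lyapunovMatrix, add_apply, kroneckerMap_apply]
    fun_prop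
  have hinv : ContinuousAt (fun B => (lyapunovMatrix B)⁻¹) B := by
    refine (continuousAt_matrix_inv _ ?_).comp hL.continuousAt
    rw [Ring.inverse_eq_inv']
    exact continuousAt_inv₀ hB.isUnit_det_lyapunovMatrix.ne_zero
  have hentry (i j : n) : Continuous fun M : Matrix (n × n) (n × n) ℝ => (M *ᵥ vec Q) (j, i) :=
    (continuous_apply (j, i)).comp (continuous_id.matrix_mulVec continuous_const)
  exact continuousAt_pi.mpr fun i => continuousAt_pi.mpr fun j =>
    (hentry i j).continuousAt.comp hinv

theorem posDef_of_mul_add_mul_transpose_eq_neg {B X Q : Matrix n n ℝ} (hB : B.IsHurwitz)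
    (hQ : Q.PosDef) (h : B * X + X * Bᵀ = -Q) : X.PosDef := by
  let path : ℝ → Matrix n n ℝ := fun u => u • B - (1 - u) • 1
  have hpath : ∀ u ∈ Icc (0 : ℝ) 1, (path u).IsHurwitz := fun u hu => hB.smul_sub_smul_one hu
  have hsymm : ∀ u ∈ Icc (0 : ℝ) 1, (lyapunovSolution (path u) (-Q)).IsHermitian := fun u hu =>
    isHermitian_iff_isSymm.mpr
      ((hpath u hu).isSymm_lyapunovSolution (isHermitian_iff_isSymm.mp hQ.1.neg))
  have hcont : ContinuousOn (fun u => lyapunovSolution (path u) (-Q)) (Icc 0 1) :=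
    fun u hu => (((hpath u hu).continuousAt_lyapunovSolution (-Q)).comp
      (by fun_prop : Continuous path).continuousAt).continuousWithinAt
  have h0 : lyapunovSolution (path 0) (-Q) = (2⁻¹ : ℝ) • Q := by
    refine ((hpath 0 (left_mem_Icc.mpr zero_le_one)).eq_lyapunovSolution ?_).symm
    simp only [path, zero_smul, sub_zero, one_smul, zero_sub, Matrix.neg_mul, Matrix.one_mul,
      transpose_neg, transpose_one, Matrix.mul_neg, Matrix.mul_one]
    module
  have h1 : lyapunovSolution (path 1) (-Q) = X := by
    refine ((hpath 1 (right_mem_Icc.mpr zero_le_one)).eq_lyapunovSolution ?_).symm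
    simpa [path] using h
  rw [← h1]
  exact PosDef.of_continuousOn_Icc hcont hsymm (h0 ▸ hQ.smul (by norm_num)) fun u hu hpsd =>
    hpsd.posDef_of_mul_add_mul_transpose_eq_neg hQ ((hpath u hu).lyapunovSolution_spec _)

theorem posSemidef_of_mul_add_mul_transpose_eq_neg {B X Q : Matrix n n ℝ} (hB : B.IsHurwitz)
    (hQ : Q.PosSemidef) (h : B * X + X * Bᵀ = -Q) : X.PosSemidef := by
  set X₀ := lyapunovSolution B (-1)
  have hpert (ε : ℝ) (hε : 0 < ε) : (X + ε • X₀).PosDef :=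
    hB.posDef_of_mul_add_mul_transpose_eq_neg (PosDef.posSemidef_add hQ (PosDef.one.smul hε)) (by
      rw [Matrix.mul_add, Matrix.add_mul, Matrix.mul_smul, Matrix.smul_mul, add_add_add_comm, h,
        ← smul_add, hB.lyapunovSolution_spec]
      module)
  have hX : X.IsHermitian := isHermitian_iff_isSymm.mpr <| hB.eq_lyapunovSolution h ▸
    hB.isSymm_lyapunovSolution (isHermitian_iff_isSymm.mp hQ.1.neg)
  refine PosSemidef.of_dotProduct_mulVec_nonneg hX fun w => ?_
  have hlim : Tendsto (fun ε : ℝ => star w ⬝ᵥ (X + ε • X₀) *ᵥ w) (𝓝[>] 0)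
      (𝓝 (star w ⬝ᵥ X *ᵥ w)) := by
    have : Continuous (fun ε : ℝ => star w ⬝ᵥ (X + ε • X₀) *ᵥ w) := by fun_prop
    simpa using this.continuousWithinAt (s := Ioi 0) (x := 0) |>.tendsto
  exact ge_of_tendsto hlim (eventually_nhdsWithin_of_forall fun ε hε =>
    (hpert ε hε).posSemidef.dotProduct_mulVec_nonneg w)

end IsHurwitz

def riccati {R : Type*} [CommRing R] (A P : Matrix n n R) : Matrix n n R :=
  P * A + Aᵀ * P + 2 • P ^ 2

section Riccati

variable {R : Type*} [CommRing R] {A P : Matrix n n R}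

theorem riccati_eq_add_transpose (hP : P.IsSymm) :
    riccati A P = P * (A + P) + (P * (A + P))ᵀ := by
  rw [riccati, transpose_mul, transpose_add, hP.eq]
  noncomm_ring

theorem isSymm_riccati (hP : P.IsSymm) : (riccati A P).IsSymm := by
  rw [riccati_eq_add_transpose hP]
  exact isSymm_add_transpose_self _

theorem dotProduct_riccati_mulVec (hP : P.IsSymm) (x : n → R) :
    x ⬝ᵥ riccati A P *ᵥ x = 2 * (x ⬝ᵥ (P * (A + P)) *ᵥ x) := by
  rw [riccati_eq_add_transpose hP, add_mulVec, dotProduct_add, dotProduct_mulVec x _ᵀ,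
    vecMul_transpose, dotProduct_comm, two_mul]

end Riccati

theorem posSemidef_neg_riccati_iff {A P : Matrix n n ℝ} (hP : P.IsSymm) :
    (-riccati A P).PosSemidef ↔ ∀ x, x ⬝ᵥ (P * (A + P)) *ᵥ x ≤ 0 := by
  rw [posSemidef_iff_dotProduct_mulVec, isHermitian_iff_isSymm]
  simp only [star_trivial, neg_mulVec, dotProduct_neg, dotProduct_riccati_mulVec hP, neg_nonneg]
  exact ⟨fun h x => by linarith [h.2 x],
    fun h => ⟨(isSymm_riccati hP).neg, fun x => by linarith [h x]⟩⟩

theorem mulVec_dotProduct_mulVec_eq_zero_of_riccati_eq_zero {A P : Matrix n n ℝ}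
    (hP : P.IsSymm) (h : riccati A P = 0) (x : n → ℝ) : P *ᵥ x ⬝ᵥ (A + P) *ᵥ x = 0 := by
  have := dotProduct_riccati_mulVec (A := A) hP x
  rw [h, zero_mulVec, dotProduct_zero, ← mulVec_mulVec, dotProduct_mulVec, ← mulVec_transpose,
    hP.eq] at this
  linarith

theorem riccati_inv_eq_zero {A X : Matrix n n ℝ} (hX : IsUnit X.det)
    (h : A * X + X * Aᵀ = -2) : riccati A X⁻¹ = 0 := by
  have hXY := mul_nonsing_inv X hX
  have hYX := nonsing_inv_mul X hX
  unfold riccati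
  linear_combination (norm := noncomm_ring) X⁻¹ * h * X⁻¹ - X⁻¹ * A * hXY - hYX * Aᵀ * X⁻¹

-- with `P = Y - E`, both sides expand to `-2 (E X + X E) - X (E A + Aᵀ E) X`
theorem mul_conj_add_conj_mul_transpose {A X Y : Matrix n n ℝ} (hXY : X * Y = 1)
    (hYX : Y * X = 1) (h : A * X + X * Aᵀ = -2) (E : Matrix n n ℝ) :
    A * (X * E * X) + X * E * X * Aᵀ = -(X * (2 • E ^ 2 - riccati A (Y - E)) * X) := by
  unfold riccati
  linear_combination (norm := (noncomm_ring; simp)) h * E * X + X * E * h - h - hXY * A * X -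
    X * Aᵀ * hYX - 2 • (X * Y * hYX) - 2 * hXY + 2 • (X * E * hYX) + 2 • (hXY * E * X)

theorem IsHurwitz.posSemidef_inv_sub {A X P : Matrix n n ℝ} (hA : A.IsHurwitz) (hX : X.PosDef)
    (hXeq : A * X + X * Aᵀ = -2) (hP : P.IsSymm) (hfeas : (-riccati A P).PosSemidef) :
    (X⁻¹ - P).PosSemidef := by
  have hdet := (isUnit_iff_isUnit_det X).mp hX.isUnit
  have hXY := mul_nonsing_inv X hdet
  have hYX := nonsing_inv_mul X hdet
  have hXH : Xᴴ = X := hX.1.eq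
  have hYH : X⁻¹ᴴ = X⁻¹ := by rw [conjTranspose_nonsing_inv, hXH]
  set E := X⁻¹ - P
  have hEH : Eᴴ = E := by
    rw [conjTranspose_sub, hYH, conjTranspose_eq_transpose_of_trivial, hP.eq]
  have hE2 : (E ^ 2).PosSemidef := by
    rw [sq]
    nth_rewrite 1 [← hEH]
    exact posSemidef_conjTranspose_mul_self E
  have hQ : (X * (2 • E ^ 2 - riccati A P) * X).PosSemidef := by
    have := ((hE2.add hE2).add hfeas).mul_mul_conjTranspose_same X
    rwa [hXH, ← two_nsmul, ← sub_eq_add_neg] at this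
  have hF : (X * E * X).PosSemidef := by
    refine hA.posSemidef_of_mul_add_mul_transpose_eq_neg hQ ?_
    rw [mul_conj_add_conj_mul_transpose hXY hYX hXeq E, sub_sub_cancel]
  have := hF.mul_mul_conjTranspose_same X⁻¹
  rwa [hYH, ← Matrix.mul_assoc, ← Matrix.mul_assoc, hYX, Matrix.one_mul, Matrix.mul_assoc, hXY,
    Matrix.mul_one] at this

theorem IsHurwitz.exists_maximal_riccati_solution {A : Matrix n n ℝ} (hA : A.IsHurwitz) :
    ∃ Y : Matrix n n ℝ, Y.IsSymm ∧ riccati A Y = 0 ∧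
      ∀ P : Matrix n n ℝ, P.IsSymm → (-riccati A P).PosSemidef → (Y - P).PosSemidef := by
  set X := lyapunovSolution A (-2)
  have hXeq : A * X + X * Aᵀ = -2 := hA.lyapunovSolution_spec _
  have hX : X.PosDef := hA.posDef_of_mul_add_mul_transpose_eq_neg (.ofNat 2) hXeq
  exact ⟨X⁻¹, isHermitian_iff_isSymm.mp hX.inv.1,
    riccati_inv_eq_zero ((isUnit_iff_isUnit_det X).mp hX.isUnit) hXeq,
    fun P hP => hA.posSemidef_inv_sub hX hXeq hP⟩

end Matrix

theorem trace_maximal_feasible_is_riccati_general (n : ℕ)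
    (A Phat : Matrix (Fin n) (Fin n) ℝ)
    (hstab : ∀ μ ∈ spectrum ℂ (A.map (Complex.ofReal : ℝ → ℂ)), μ.re < 0)
    (hPhatSymm : Phat.IsSymm)
    (hPhatFeas : ∀ x : Fin n → ℝ, x ⬝ᵥ ((Phat * (A + Phat)).mulVec x) ≤ 0)
    (hmax : ∀ P : Matrix (Fin n) (Fin n) ℝ, P.IsSymm →
      (∀ x : Fin n → ℝ, x ⬝ᵥ ((P * (A + P)).mulVec x) ≤ 0) →
      P.trace ≤ Phat.trace) :
    Phat * A + Aᵀ * Phat + 2 • Phat^2 = 0 ∧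
    ∀ x : Fin n → ℝ, (Phat.mulVec x) ⬝ᵥ ((A + Phat).mulVec x) = 0 := by
  obtain ⟨Y, hY, hYric, hYmax⟩ := IsHurwitz.exists_maximal_riccati_solution hstab
  have hle : (Y - Phat).PosSemidef :=
    hYmax Phat hPhatSymm ((posSemidef_neg_riccati_iff hPhatSymm).mpr hPhatFeas)
  have htr : Y.trace ≤ Phat.trace :=
    hmax Y hY ((posSemidef_neg_riccati_iff hY).mp (by rw [hYric, neg_zero]; exact .zero))
  have hPhat : Phat = Y := (sub_eq_zero.mp <| hle.trace_eq_zero_iff.mp <|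
    le_antisymm (by rw [trace_sub]; linarith) hle.trace_nonneg).symm
  have hric : riccati A Phat = 0 := hPhat ▸ hYric
  exact ⟨hric, mulVec_dotProduct_mulVec_eq_zero_of_riccati_eq_zero hPhatSymm hric⟩

/-- for a stable matrix `A` (all complex eigenvalues have
negative real part), any trace-maximal feasible symmetric matrix `P̂`
(feasible meaning `xᵀP(A+P)x ≤ 0` for all `x`) satisfies the algebraic
Riccati equation `P̂A + AᵀP̂ + 2P̂² = 0`, and hence `⟨P̂x, (A+P̂)x⟩ = 0` for
all `x`, so `U(x) = (1/2)xᵀP̂x` yields an orthogonal decomposition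
`Ax = −∇U(x) + (A+P̂)x`. -/
theorem trace_maximal_feasible_is_riccati (n : ℕ) (hn : 1 ≤ n)
    (A Phat : Matrix (Fin n) (Fin n) ℝ)
    (hstab : ∀ μ ∈ spectrum ℂ (A.map (Complex.ofReal : ℝ → ℂ)), μ.re < 0)
    (hPhatSymm : Phat.IsSymm)
    (hPhatFeas : ∀ x : Fin n → ℝ, x ⬝ᵥ ((Phat * (A + Phat)).mulVec x) ≤ 0)
    (hmax : ∀ P : Matrix (Fin n) (Fin n) ℝ, P.IsSymm →
      (∀ x : Fin n → ℝ, x ⬝ᵥ ((P * (A + P)).mulVec x) ≤ 0) →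
      P.trace ≤ Phat.trace) :
    Phat * A + Aᵀ * Phat + 2 • Phat^2 = 0 ∧
    ∀ x : Fin n → ℝ, (Phat.mulVec x) ⬝ᵥ ((A + Phat).mulVec x) = 0 :=
  trace_maximal_feasible_is_riccati_general n A Phat hstab hPhatSymm hPhatFeas hmax
end

section
/- Let n ≥ 1, let f : ℝⁿ → ℝⁿ, and let U, V : ℝⁿ → ℝ be differentiable. Suppose that for all x ∈ ℝⁿ: (i) ⟨∇V(x), f(x)⟩ + ‖∇V(x)‖² ≤ 0, and (ii) ⟨∇V(x), f(x) + 2∇U(x)⟩ ≥ ‖∇U(x)‖² (the iterative-improvement constraint with α = 0). Then ∇V(x) = ∇U(x) for all x ∈ ℝⁿ, and ⟨∇U(x), f(x) + ∇U(x)⟩ = 0 for all x, i.e. the decomposition f = −∇U + (f + ∇U) is orthogonal. -/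
open scoped RealInnerProductSpace

section InnerProductSpace

variable {E : Type*} [NormedAddCommGroup E] [InnerProductSpace ℝ E] {u v w : E}

/-- Adding the two constraints gives `‖v - u‖² ≤ 0`. -/
theorem eq_of_inner_add_norm_sq_nonpos_of_norm_sq_le_inner
    (hsub : ⟪v, w⟫ + ‖v‖ ^ 2 ≤ 0) (himp : ‖u‖ ^ 2 ≤ ⟪v, w + 2 • u⟫) : v = u := by
  have hexpand : ⟪v, w + 2 • u⟫ = ⟪v, w⟫ + 2 * ⟪v, u⟫ := by
    rw [inner_add_right, inner_smul_right_eq_smul, nsmul_eq_mul, Nat.cast_ofNat]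
  have hdist : ‖v - u‖ ^ 2 ≤ 0 := by
    rw [norm_sub_sq_real]
    linarith
  rw [← sub_eq_zero, ← norm_eq_zero]
  exact pow_eq_zero_iff two_ne_zero |>.mp (le_antisymm hdist (sq_nonneg _))

theorem inner_add_self_eq_zero_of_inner_add_norm_sq_nonpos_of_norm_sq_le_inner
    (hsub : ⟪u, w⟫ + ‖u‖ ^ 2 ≤ 0) (himp : ‖u‖ ^ 2 ≤ ⟪u, w + 2 • u⟫) : ⟪u, w + u⟫ = 0 := by
  rw [inner_add_right, inner_smul_right_eq_smul, nsmul_eq_mul, Nat.cast_ofNat,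
    real_inner_self_eq_norm_sq] at himp
  rw [inner_add_right, real_inner_self_eq_norm_sq]
  linarith

end InnerProductSpace

theorem iterative_improvement_alpha_zero_general (n : ℕ)
    (f : EuclideanSpace ℝ (Fin n) → EuclideanSpace ℝ (Fin n))
    (U V : EuclideanSpace ℝ (Fin n) → ℝ)
    (hVsub : ∀ x, ⟪gradient V x, f x⟫ + ‖gradient V x‖^2 ≤ 0)
    (himp : ∀ x, ⟪gradient V x, f x + 2 • gradient U x⟫ ≥ ‖gradient U x‖^2) :
    (∀ x : EuclideanSpace ℝ (Fin n), gradient V x = gradient U x) ∧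
    (∀ x : EuclideanSpace ℝ (Fin n), ⟪gradient U x, f x + gradient U x⟫ = 0) := by
  have hgrad x : gradient V x = gradient U x :=
    eq_of_inner_add_norm_sq_nonpos_of_norm_sq_le_inner (hVsub x) (himp x)
  refine ⟨hgrad, fun x => ?_⟩
  have hsub := hVsub x
  have himp' := himp x
  rw [hgrad x] at hsub himp'
  exact inner_add_self_eq_zero_of_inner_add_norm_sq_nonpos_of_norm_sq_le_inner hsub himp'

/-- the `α = 0` case of the iterative-improvement constraints
forces `∇V = ∇U` everywhere and orthogonality of the decomposition
`f = −∇U + (f + ∇U)`. -/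
theorem iterative_improvement_alpha_zero (n : ℕ) (hn : 1 ≤ n)
    (f : EuclideanSpace ℝ (Fin n) → EuclideanSpace ℝ (Fin n))
    (U V : EuclideanSpace ℝ (Fin n) → ℝ)
    (hU : Differentiable ℝ U) (hV : Differentiable ℝ V)
    (hVsub : ∀ x, ⟪gradient V x, f x⟫ + ‖gradient V x‖^2 ≤ 0)
    (himp : ∀ x, ⟪gradient V x, f x + 2 • gradient U x⟫ ≥ ‖gradient U x‖^2) :
    (∀ x : EuclideanSpace ℝ (Fin n), gradient V x = gradient U x) ∧
    (∀ x : EuclideanSpace ℝ (Fin n), ⟪gradient U x, f x + gradient U x⟫ = 0) :=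
  iterative_improvement_alpha_zero_general n f U V hVsub himp
end

section
/- Define f : ℝ² → ℝ² by f(x, y) = (−1 + 9x − 2x³ + 9y − 2y³, 1 − 11x + 2x³ + 11y − 2y³), and define U : ℝ² → ℝ by U(x, y) = 0.5·(x⁴ + y⁴) − 5·(x² + y²) + x·y + x. Then for all (x, y) ∈ ℝ², f(x, y) = −∇U(x, y) + f_U(x, y) where f_U(x, y) = (−∂U/∂y (x,y), ∂U/∂x (x,y)); in particular ⟨∇U(x,y), f_U(x,y)⟩ = 0 for all (x, y), so f admits an orthogonal decomposition with potential U. -/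
/-! Each coordinate section of `U` is a quartic polynomial in one variable, so its partial
derivatives are `∂ₓU = 2x³ − 10x + y + 1` and `∂ᵧU = 2y³ − 10y + x`; both identities are then
polynomial identities in `x, y`. Orthogonality holds for any potential, since `f_U` is `∇U`
rotated by a right angle. -/

lemma hasDerivAt_quartic (a b c d x : ℝ) :
    HasDerivAt (fun s : ℝ => a * s ^ 4 + b * s ^ 2 + c * s + d)
      (a * (4 * x ^ 3) + b * (2 * x) + c) x := by
  simpa using ((((hasDerivAt_pow 4 x).const_mul a).add ((hasDerivAt_pow 2 x).const_mul b)).add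
    ((hasDerivAt_id x).const_mul c)).add_const d

lemma deriv_quartic (a b c d x : ℝ) :
    deriv (fun s : ℝ => a * s ^ 4 + b * s ^ 2 + c * s + d) x
      = a * (4 * x ^ 3) + b * (2 * x) + c :=
  (hasDerivAt_quartic a b c d x).deriv

/-- the quartic multistable system of Zhou et al. admits an
orthogonal decomposition `f = −∇U + f_U` with
`U(x,y) = 0.5(x⁴+y⁴) − 5(x²+y²) + xy + x` and
`f_U = (−∂U/∂y, ∂U/∂x)`, which is pointwise orthogonal to `∇U`. -/
theorem zhou_quartic_orthogonal_decomposition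
    (f : ℝ × ℝ → ℝ × ℝ) (U : ℝ × ℝ → ℝ)
    (hf : ∀ p : ℝ × ℝ, f p =
      (-1 + 9*p.1 - 2*p.1^3 + 9*p.2 - 2*p.2^3,
        1 - 11*p.1 + 2*p.1^3 + 11*p.2 - 2*p.2^3))
    (hU : ∀ p : ℝ × ℝ, U p =
      0.5*(p.1^4 + p.2^4) - 5*(p.1^2 + p.2^2) + p.1*p.2 + p.1) :
    ∀ p : ℝ × ℝ,
      ((f p).1 = -(deriv (fun s => U (s, p.2)) p.1) +
          -(deriv (fun s => U (p.1, s)) p.2) ∧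
        (f p).2 = -(deriv (fun s => U (p.1, s)) p.2) +
          (deriv (fun s => U (s, p.2)) p.1)) ∧
      (deriv (fun s => U (s, p.2)) p.1) * (-(deriv (fun s => U (p.1, s)) p.2)) +
        (deriv (fun s => U (p.1, s)) p.2) * (deriv (fun s => U (s, p.2)) p.1) = 0 := by
  rintro ⟨x, y⟩
  have section_fst : (fun s => U (s, y))
      = fun s => 0.5 * s ^ 4 + (-5) * s ^ 2 + (y + 1) * s + (0.5 * y ^ 4 - 5 * y ^ 2) :=
    funext fun s => by rw [hU]; ring
  have section_snd : (fun s => U (x, s))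
      = fun s => 0.5 * s ^ 4 + (-5) * s ^ 2 + x * s + (0.5 * x ^ 4 - 5 * x ^ 2 + x) :=
    funext fun s => by rw [hU]; ring
  simp only [section_fst, section_snd, deriv_quartic, hf]
  exact ⟨⟨by ring, by ring⟩, by ring⟩
end
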